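/- arXiv:1610.07911 — 3 statements merged into one kernel-verified Lean document; each statement's English description precedes it below -/
import Mathlib

section
/- The map (K, u) ↦ x_K(u) is continuous on the product of the space of strictly convex bodies in ℝ^n (with the Hausdorff metric) and the unit sphere S^{n−1}, where x_K(u) is the unique point of K maximizing ⟨·,u⟩. -/
open scoped RealInnerProductSpace
open Filter Metric Topology

/-!
Fix `(K, u)`. Points of bodies Hausdorff-close to `K` lie in the compact `1`-neighbourhood of
`K`, so it suffices to identify the cluster points of `x_{K'}(u')` as `(K', u') → (K, u)`. Such a
cluster point lies in `K`, and since every point of `K` is a limit of points of the nearby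
bodies, it maximizes `⟪·, u⟫` on `K`; strict convexity makes that maximizer unique.
-/

theorem not_isLocalMax_inner {E : Type*} [NormedAddCommGroup E] [InnerProductSpace ℝ E]
    {u : E} (hu : u ≠ 0) (a : E) : ¬IsLocalMax (fun z => ⟪z, u⟫) a := by
  intro h
  have hφ : (fun z => ⟪z, u⟫) = innerSL ℝ u := by
    ext z
    simp [real_inner_comm]
  rw [hφ] at h
  have hzero : innerSL ℝ u = 0 := h.hasFDerivAt_eq_zero (innerSL ℝ u).hasFDerivAt
  have : ⟪u, u⟫ = 0 := by simpa using congrArg (fun φ : E →L[ℝ] ℝ => φ u) hzero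
  exact hu (inner_self_eq_zero.1 this)

/-- Strict convexity puts the midpoint of two distinct maximizers in the interior, where the
nonzero linear functional `⟪·, u⟫` cannot attain its maximum. -/
theorem StrictConvex.eq_of_isMaxOn_inner {E : Type*} [NormedAddCommGroup E]
    [InnerProductSpace ℝ E] {K : Set E} (hK : StrictConvex ℝ K) {u : E} (hu : u ≠ 0)
    {x y : E} (hx : x ∈ K) (hy : y ∈ K) (hxm : IsMaxOn (fun z => ⟪z, u⟫) K x)
    (hym : IsMaxOn (fun z => ⟪z, u⟫) K y) : x = y := by
  by_contra hne
  have hxy : ⟪x, u⟫ = ⟪y, u⟫ := le_antisymm (hym hx) (hxm hy)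
  set m : E := (1 / 2 : ℝ) • x + (1 / 2 : ℝ) • y
  have hm : m ∈ interior K := hK hx hy hne (by norm_num) (by norm_num) (by norm_num)
  have hmu : ⟪m, u⟫ = ⟪x, u⟫ := by
    simp only [m, inner_add_left, real_inner_smul_left, ← hxy]
    ring
  have hmax : IsMaxOn (fun z => ⟪z, u⟫) K m :=
    isMaxOn_iff.2 fun z hz => (isMaxOn_iff.1 hxm z hz).trans hmu.ge
  exact not_isLocalMax_inner hu m (hmax.isLocalMax (mem_interior_iff_mem_nhds.1 hm))

namespace ConvexBody

variable {V : Type*} [NormedAddCommGroup V] [NormedSpace ℝ V]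
  {ι : Type*} {l : Filter ι} {K : ι → ConvexBody V} {L : ConvexBody V}

theorem infDist_le_dist {x : V} {K : ConvexBody V} (hx : x ∈ K) (L : ConvexBody V) :
    infDist x (L : Set V) ≤ dist K L :=
  infDist_le_hausdorffDist_of_mem hx hausdorffEDist_ne_top

theorem eventually_subset_cthickening (hK : Tendsto K l (𝓝 L)) {ε : ℝ} (hε : 0 < ε) :
    ∀ᶠ i in l, (K i : Set V) ⊆ cthickening ε (L : Set V) := by
  filter_upwards [hK (ball_mem_nhds L hε)] with i hi x hx
  obtain ⟨y, hyL, hxy⟩ :=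
    exists_dist_lt_of_hausdorffDist_lt hx (mem_ball.1 hi) hausdorffEDist_ne_top
  exact mem_cthickening_of_dist_le x y ε _ hyL hxy.le

theorem exists_tendsto_of_mem (hK : Tendsto K l (𝓝 L)) {z : V} (hz : z ∈ L) :
    ∃ w : ι → V, (∀ i, w i ∈ K i) ∧ Tendsto w l (𝓝 z) := by
  choose w hwK hwd using fun i => (K i).isCompact.exists_infDist_eq_dist (K i).nonempty z
  refine ⟨w, hwK, tendsto_iff_dist_tendsto_zero.2 ?_⟩
  refine squeeze_zero (fun _ => dist_nonneg) (fun i => ?_) (tendsto_iff_dist_tendsto_zero.1 hK)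
  rw [dist_comm, ← hwd i, dist_comm]
  exact infDist_le_dist hz (K i)

theorem mem_of_tendsto [l.NeBot] (hK : Tendsto K l (𝓝 L)) {x : ι → V} {y : V}
    (hx : Tendsto x l (𝓝 y)) (hmem : ∀ i, x i ∈ K i) : y ∈ L := by
  have hdist : Tendsto (fun i => infDist (x i) (L : Set V)) l (𝓝 0) :=
    squeeze_zero (fun _ => infDist_nonneg) (fun i => infDist_le_dist (hmem i) L)
      (tendsto_iff_dist_tendsto_zero.1 hK)
  have hy : infDist y (L : Set V) = 0 :=
    tendsto_nhds_unique (((continuous_infDist_pt _).tendsto y).comp hx) hdist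
  exact (L.isClosed.mem_iff_infDist_zero L.nonempty).2 hy

theorem isMaxOn_inner_of_tendsto {E : Type*} [NormedAddCommGroup E]
    [InnerProductSpace ℝ E] [l.NeBot] {K : ι → ConvexBody E}
    {L : ConvexBody E} (hK : Tendsto K l (𝓝 L)) {u : ι → E} {v : E} (hu : Tendsto u l (𝓝 v))
    {x : ι → E} {y : E} (hx : Tendsto x l (𝓝 y))
    (hmax : ∀ i, IsMaxOn (fun z => ⟪z, u i⟫) (K i) (x i)) :
    IsMaxOn (fun z => ⟪z, v⟫) L y := by
  intro z hz
  obtain ⟨w, hwK, hw⟩ := exists_tendsto_of_mem hK hz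
  exact le_of_tendsto_of_tendsto' (hw.inner hu) (hx.inner hu) fun i =>
    isMaxOn_iff.1 (hmax i) (w i) (hwK i)

end ConvexBody

/-- The map `(K, u) ↦ x_K(u)` is continuous on the product of the space of strictly convex
bodies in `ℝⁿ` (with the Hausdorff metric) and the unit sphere `S^{n-1}`, where `x_K(u)` is the
unique point of `K` maximizing `⟪·,u⟫`. -/
theorem stmt4 {n : ℕ}
    (f : {K : ConvexBody (EuclideanSpace ℝ (Fin n)) //
            StrictConvex ℝ (K : Set (EuclideanSpace ℝ (Fin n)))} ×
          Metric.sphere (0 : EuclideanSpace ℝ (Fin n)) 1 → EuclideanSpace ℝ (Fin n))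
    (hf : ∀ p, f p ∈ (p.1 : ConvexBody (EuclideanSpace ℝ (Fin n))) ∧
      IsMaxOn (fun y => ⟪y, (p.2 : EuclideanSpace ℝ (Fin n))⟫)
        ((p.1 : ConvexBody (EuclideanSpace ℝ (Fin n))) : Set (EuclideanSpace ℝ (Fin n))) (f p)) :
    Continuous f := by
  refine continuous_iff_continuousAt.2 fun q => ?_
  have hK : Tendsto (fun p => (p.1 : ConvexBody (EuclideanSpace ℝ (Fin n)))) (𝓝 q) (𝓝 q.1) :=
    (continuous_subtype_val.comp continuous_fst).continuousAt
  have hu : Tendsto (fun p => (p.2 : EuclideanSpace ℝ (Fin n))) (𝓝 q) (𝓝 q.2) :=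
    (continuous_subtype_val.comp continuous_snd).continuousAt
  refine (q.1.1.isCompact.cthickening (r := 1)).tendsto_nhds_of_unique_mapClusterPt ?_ ?_
  · filter_upwards [ConvexBody.eventually_subset_cthickening hK one_pos] with p hp
      using hp (hf p).1
  · intro y _ hy
    obtain ⟨U, hU, hfU⟩ := mapClusterPt_iff_ultrafilter.1 hy
    exact q.1.2.eq_of_isMaxOn_inner (ne_zero_of_mem_unit_sphere q.2)
      (ConvexBody.mem_of_tendsto (hK.mono_left hU) hfU fun p => (hf p).1) (hf q).1
      (ConvexBody.isMaxOn_inner_of_tendsto (hK.mono_left hU) (hu.mono_left hU) hfU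
        fun p => (hf p).2) (hf q).2
end

section
/- For strictly convex bodies K, L in ℝ^n and k, m ∈ ℕ, the set B_{k,m}(K,L) = {u ∈ S^{n−1} : there exists t ∈ T_u with N(t,1/m) ∩ T_u ⊆ A_k(K,L,u)} is closed in S^{n−1}. -/
open scoped RealInnerProductSpace

variable {n : ℕ}

/-- `u ⊞ λt = (u + λt)/‖u + λt‖`. -/
noncomputable def boxplus (u t : EuclideanSpace ℝ (Fin n)) (l : ℝ) : EuclideanSpace ℝ (Fin n) :=
  ‖u + l • t‖⁻¹ • (u + l • t)

/-- `ε`-tameness of `x` at `u` in direction `t`. -/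
def IsTame (x : EuclideanSpace ℝ (Fin n) → EuclideanSpace ℝ (Fin n))
    (u t : EuclideanSpace ℝ (Fin n)) (ε : ℝ) : Prop :=
  ∀ lam mu : ℝ, 0 < lam → lam < ε → 0 < mu → mu < ε →
    ⟪x (boxplus u t lam) - x u, t⟫ * ⟪x (boxplus u t (-mu)) - x u, t⟫ ≤ 0

/-- The angular metric `Δ(u,v) = arccos ⟪u,v⟫` on the unit sphere. -/
noncomputable def angDist (u v : EuclideanSpace ℝ (Fin n)) : ℝ := Real.arccos ⟪u, v⟫

open Filter Topology

/-- On a strictly convex set, maximizers of a nonzero linear functional are unique. -/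
lemma argmax_eq {S : Set (EuclideanSpace ℝ (Fin n))} (hS : StrictConvex ℝ S)
    {v x y : EuclideanSpace ℝ (Fin n)} (hv : ‖v‖ = 1) (hx : x ∈ S) (hy : y ∈ S)
    (hmx : IsMaxOn (fun z => ⟪z, v⟫) S x) (hmy : IsMaxOn (fun z => ⟪z, v⟫) S y) : x = y := by
  by_contra hne
  have hz : (1/2 : ℝ) • x + (1/2 : ℝ) • y ∈ interior S :=
    hS hx hy hne (by norm_num) (by norm_num) (by norm_num)
  set z := (1/2 : ℝ) • x + (1/2 : ℝ) • y with hzdef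
  obtain ⟨ε, hε, hball⟩ := Metric.mem_nhds_iff.mp (mem_interior_iff_mem_nhds.mp hz)
  have hp : z + (ε/2) • v ∈ S := by
    apply hball
    simp only [Metric.mem_ball, dist_eq_norm, add_sub_cancel_left, norm_smul, hv]
    rw [Real.norm_eq_abs, abs_of_pos (by linarith)]
    linarith
  have h1 : ⟪y, v⟫ ≤ ⟪x, v⟫ := hmx hy
  have h2 : ⟪x, v⟫ ≤ ⟪y, v⟫ := hmy hx
  have hle : ⟪z + (ε/2) • v, v⟫ ≤ ⟪x, v⟫ := hmx hp
  have hvv : ⟪v, v⟫ = 1 := by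
    rw [real_inner_self_eq_norm_sq, hv]; norm_num
  rw [inner_add_left, hzdef, inner_add_left, real_inner_smul_left, real_inner_smul_left,
    real_inner_smul_left, hvv] at hle
  linarith

/-- The (unique) maximizer map is sequentially continuous on the unit sphere. -/
lemma argmax_tendsto {S : Set (EuclideanSpace ℝ (Fin n))} (hSc : IsCompact S)
    (hS : StrictConvex ℝ S) {x : EuclideanSpace ℝ (Fin n) → EuclideanSpace ℝ (Fin n)}
    (hx : ∀ v ∈ Metric.sphere (0 : EuclideanSpace ℝ (Fin n)) 1,
      x v ∈ S ∧ IsMaxOn (fun y => ⟪y, v⟫) S (x v))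
    {v : ℕ → EuclideanSpace ℝ (Fin n)} {u : EuclideanSpace ℝ (Fin n)}
    (hv : ∀ i, v i ∈ Metric.sphere (0 : EuclideanSpace ℝ (Fin n)) 1)
    (hu : u ∈ Metric.sphere (0 : EuclideanSpace ℝ (Fin n)) 1)
    (hvu : Tendsto v atTop (𝓝 u)) :
    Tendsto (fun i => x (v i)) atTop (𝓝 (x u)) := by
  apply Filter.tendsto_of_subseq_tendsto
  intro ns hns
  obtain ⟨a, haS, φ, hφ, hφa⟩ := hSc.tendsto_subseq (x := fun i => x (v (ns i)))
    (fun i => (hx _ (hv _)).1)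
  refine ⟨φ, ?_⟩
  have hvns : Tendsto (fun i => v (ns (φ i))) atTop (𝓝 u) :=
    hvu.comp (hns.comp hφ.tendsto_atTop)
  have hunorm : ‖u‖ = 1 := by simpa using hu
  have ha : a = x u := by
    refine argmax_eq hS hunorm haS (hx u hu).1 ?_ (hx u hu).2
    intro y hy
    have hle : ∀ i, ⟪y, v (ns (φ i))⟫ ≤ ⟪x (v (ns (φ i))), v (ns (φ i))⟫ :=
      fun i => (hx _ (hv _)).2 hy
    have h1 : Tendsto (fun i => ⟪y, v (ns (φ i))⟫) atTop (𝓝 ⟪y, u⟫) :=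
      Filter.Tendsto.inner tendsto_const_nhds hvns
    have h2 : Tendsto (fun i => ⟪x (v (ns (φ i))), v (ns (φ i))⟫) atTop (𝓝 ⟪a, u⟫) :=
      hφa.inner hvns
    exact le_of_tendsto_of_tendsto' h1 h2 hle
  rw [ha] at hφa
  exact hφa

lemma norm_add_smul_orth {u s : EuclideanSpace ℝ (Fin n)} (hu : ‖u‖ = 1) (hs : ‖s‖ = 1)
    (h : ⟪s, u⟫ = 0) (l : ℝ) : ‖u + l • s‖ ^ 2 = 1 + l ^ 2 := by
  have h' : ⟪u, s⟫ = 0 := by rw [real_inner_comm]; exact h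
  rw [norm_add_sq_real, hu, real_inner_smul_right, h', norm_smul, hs]
  simp [mul_pow, sq_abs]

lemma add_smul_orth_ne_zero {u s : EuclideanSpace ℝ (Fin n)} (hu : ‖u‖ = 1) (hs : ‖s‖ = 1)
    (h : ⟪s, u⟫ = 0) (l : ℝ) : u + l • s ≠ 0 := by
  intro hc
  have := norm_add_smul_orth hu hs h l
  rw [hc] at this
  simp at this
  nlinarith [sq_nonneg l]

lemma boxplus_mem_sphere {u s : EuclideanSpace ℝ (Fin n)} (hu : ‖u‖ = 1) (hs : ‖s‖ = 1)
    (h : ⟪s, u⟫ = 0) (l : ℝ) :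
    boxplus u s l ∈ Metric.sphere (0 : EuclideanSpace ℝ (Fin n)) 1 := by
  have hne : u + l • s ≠ 0 := add_smul_orth_ne_zero hu hs h l
  have hn : ‖u + l • s‖ ≠ 0 := norm_ne_zero_iff.mpr hne
  rw [mem_sphere_zero_iff_norm, boxplus, norm_smul, norm_inv, norm_norm,
    inv_mul_cancel₀ hn]

lemma boxplus_tendsto {ui si : ℕ → EuclideanSpace ℝ (Fin n)} {u s : EuclideanSpace ℝ (Fin n)}
    (hu : Tendsto ui atTop (𝓝 u)) (hs : Tendsto si atTop (𝓝 s)) (l : ℝ)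
    (hne : u + l • s ≠ 0) :
    Tendsto (fun i => boxplus (ui i) (si i) l) atTop (𝓝 (boxplus u s l)) := by
  have hw : Tendsto (fun i => ui i + l • si i) atTop (𝓝 (u + l • s)) :=
    hu.add (hs.const_smul l)
  simpa only [boxplus] using (hw.norm.inv₀ (norm_ne_zero_iff.mpr hne)).smul hw

/-- For strictly convex bodies `K, L` in `ℝⁿ` and `k, m ∈ ℕ`, the set
`B_{k,m}(K,L) = {u ∈ S^{n-1} : ∃ t ∈ T_u, N(t,1/m) ∩ T_u ⊆ A_k(K,L,u)}` is closed in `S^{n-1}`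
(equivalently, closed in `ℝⁿ`, since `S^{n-1}` is closed). Here `A_k(K,L,u)` is the set of
`t ∈ T_u` at which `x_{K,L} = x_K − x_L` is `(1/k)`-tame at `u` in direction `t`, and `N(t,η)`
is the open `η`-neighborhood of `t` in `S^{n-1}` for the angular metric. -/
theorem stmt10 (K L : ConvexBody (EuclideanSpace ℝ (Fin n)))
    (hK : StrictConvex ℝ (K : Set (EuclideanSpace ℝ (Fin n))))
    (hL : StrictConvex ℝ (L : Set (EuclideanSpace ℝ (Fin n))))
    (xK xL : EuclideanSpace ℝ (Fin n) → EuclideanSpace ℝ (Fin n))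
    (hxK : ∀ v ∈ Metric.sphere (0 : EuclideanSpace ℝ (Fin n)) 1,
      xK v ∈ K ∧ IsMaxOn (fun y => ⟪y, v⟫) (K : Set (EuclideanSpace ℝ (Fin n))) (xK v))
    (hxL : ∀ v ∈ Metric.sphere (0 : EuclideanSpace ℝ (Fin n)) 1,
      xL v ∈ L ∧ IsMaxOn (fun y => ⟪y, v⟫) (L : Set (EuclideanSpace ℝ (Fin n))) (xL v))
    (k m : ℕ) :
    IsClosed {u : EuclideanSpace ℝ (Fin n) |
      u ∈ Metric.sphere (0 : EuclideanSpace ℝ (Fin n)) 1 ∧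
      ∃ t, t ∈ Metric.sphere (0 : EuclideanSpace ℝ (Fin n)) 1 ∧ ⟪t, u⟫ = 0 ∧
        ∀ s, s ∈ Metric.sphere (0 : EuclideanSpace ℝ (Fin n)) 1 → ⟪s, u⟫ = 0 →
          angDist t s < 1 / m → IsTame (fun v => xK v - xL v) u s (1 / k)} := by
  apply IsSeqClosed.isClosed
  intro U u hU hUu
  have hsph : ∀ i, U i ∈ Metric.sphere (0 : EuclideanSpace ℝ (Fin n)) 1 := fun i => (hU i).1
  have husph : u ∈ Metric.sphere (0 : EuclideanSpace ℝ (Fin n)) 1 :=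
    Metric.isClosed_sphere.mem_of_tendsto hUu (Filter.Eventually.of_forall hsph)
  have hunorm : ‖u‖ = 1 := by simpa using husph
  choose t ht1 ht2 ht3 using fun i => (hU i).2
  obtain ⟨t0, ht0sph, φ, hφ, hφt⟩ :=
    (isCompact_sphere (0 : EuclideanSpace ℝ (Fin n)) 1).tendsto_subseq ht1
  set uφ : ℕ → EuclideanSpace ℝ (Fin n) := fun i => U (φ i) with huφ
  have hUφu : Tendsto uφ atTop (𝓝 u) := hUu.comp hφ.tendsto_atTop
  have huφsph : ∀ i, uφ i ∈ Metric.sphere (0 : EuclideanSpace ℝ (Fin n)) 1 :=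
    fun i => hsph (φ i)
  have huφnorm : ∀ i, ‖uφ i‖ = 1 := fun i => by simpa using huφsph i
  have horth : ⟪t0, u⟫ = 0 := by
    have h1 : Tendsto (fun i => ⟪(t ∘ φ) i, uφ i⟫) atTop (𝓝 ⟪t0, u⟫) := hφt.inner hUφu
    have h2 : (fun i => ⟪(t ∘ φ) i, uφ i⟫) = fun i => (0 : ℝ) := funext fun i => ht2 (φ i)
    rw [h2] at h1
    exact tendsto_nhds_unique h1 tendsto_const_nhds
  classical
  refine ⟨husph, t0, ht0sph, horth, ?_⟩
  intro s hssph hsu hang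
  have hsnorm : ‖s‖ = 1 := by simpa using hssph
  -- project s orthogonally to each uφ i
  set w : ℕ → EuclideanSpace ℝ (Fin n) := fun i => s - ⟪s, uφ i⟫ • uφ i with hwdef
  have hcl : Tendsto (fun i => ⟪s, uφ i⟫) atTop (𝓝 (0 : ℝ)) := by
    have h0 : Tendsto (fun i => ⟪s, uφ i⟫) atTop (𝓝 ⟪s, u⟫) :=
      Filter.Tendsto.inner tendsto_const_nhds hUφu
    rwa [hsu] at h0
  have hwlim : Tendsto w atTop (𝓝 s) := by
    have : Tendsto (fun i => s - ⟪s, uφ i⟫ • uφ i) atTop (𝓝 (s - (0 : ℝ) • u)) :=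
      tendsto_const_nhds.sub (hcl.smul hUφu)
    simpa using this
  set sv : ℕ → EuclideanSpace ℝ (Fin n) :=
    fun i => if w i = 0 then t (φ i) else ‖w i‖⁻¹ • w i with hsvdef
  have hsv_sph : ∀ i, sv i ∈ Metric.sphere (0 : EuclideanSpace ℝ (Fin n)) 1 := by
    intro i
    by_cases h : w i = 0
    · simp only [hsvdef, h, if_pos h]; exact ht1 (φ i)
    · simp only [hsvdef, if_neg h]
      rw [mem_sphere_zero_iff_norm, norm_smul, norm_inv, norm_norm,
        inv_mul_cancel₀ (norm_ne_zero_iff.mpr h)]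
  have hsv_norm : ∀ i, ‖sv i‖ = 1 := fun i => by simpa using hsv_sph i
  have hsv_orth : ∀ i, ⟪sv i, uφ i⟫ = 0 := by
    intro i
    by_cases h : w i = 0
    · simp only [hsvdef, if_pos h]; exact ht2 (φ i)
    · simp only [hsvdef, if_neg h]
      rw [real_inner_smul_left, hwdef]
      have huu : ⟪uφ i, uφ i⟫ = 1 := by
        rw [real_inner_self_eq_norm_sq, huφnorm i]; norm_num
      rw [inner_sub_left, real_inner_smul_left, huu]
      ring
  have hwne : ∀ᶠ i in atTop, w i ≠ 0 := by
    have : ∀ᶠ i in atTop, (0 : ℝ) < ‖w i‖ := by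
      apply hwlim.norm.eventually
      rw [hsnorm]
      exact eventually_gt_nhds one_pos
    filter_upwards [this] with i hi
    exact fun hc => by simp [hc] at hi
  have hsvlim : Tendsto sv atTop (𝓝 s) := by
    have hlim2 : Tendsto (fun i => ‖w i‖⁻¹ • w i) atTop (𝓝 s) := by
      have h1 : Tendsto (fun i => ‖w i‖⁻¹) atTop (𝓝 (1 : ℝ)) := by
        have := hwlim.norm.inv₀ (by rw [hsnorm]; norm_num)
        rwa [hsnorm, inv_one] at this
      have := h1.smul hwlim
      simpa using this
    apply hlim2.congr'
    filter_upwards [hwne] with i hi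
    simp only [hsvdef, if_neg hi]
  have hanglim : Tendsto (fun i => angDist (t (φ i)) (sv i)) atTop (𝓝 (angDist t0 s)) := by
    have h1 : Tendsto (fun i => ⟪(t ∘ φ) i, sv i⟫) atTop (𝓝 ⟪t0, s⟫) := hφt.inner hsvlim
    exact (Real.continuous_arccos.continuousAt.tendsto.comp h1 : _)
  have hangev : ∀ᶠ i in atTop, angDist (t (φ i)) (sv i) < 1 / m :=
    hanglim.eventually (eventually_lt_nhds hang)
  have htame : ∀ᶠ i in atTop, IsTame (fun v => xK v - xL v) (uφ i) (sv i) (1 / k) := by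
    filter_upwards [hangev] with i hi
    exact ht3 (φ i) (sv i) (hsv_sph i) (hsv_orth i) hi
  -- now prove tameness at the limit
  intro lam mu hl1 hl2 hm1 hm2
  have key : ∀ l : ℝ,
      Tendsto (fun i => xK (boxplus (uφ i) (sv i) l) - xL (boxplus (uφ i) (sv i) l)) atTop
        (𝓝 (xK (boxplus u s l) - xL (boxplus u s l))) := by
    intro l
    have hbpsph : ∀ i, boxplus (uφ i) (sv i) l ∈
        Metric.sphere (0 : EuclideanSpace ℝ (Fin n)) 1 :=
      fun i => boxplus_mem_sphere (huφnorm i) (hsv_norm i) (hsv_orth i) l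
    have hbplim : Tendsto (fun i => boxplus (uφ i) (sv i) l) atTop (𝓝 (boxplus u s l)) :=
      boxplus_tendsto hUφu hsvlim l (add_smul_orth_ne_zero hunorm hsnorm hsu l)
    have hbpusph : boxplus u s l ∈ Metric.sphere (0 : EuclideanSpace ℝ (Fin n)) 1 :=
      boxplus_mem_sphere hunorm hsnorm hsu l
    have hk : Tendsto (fun i => xK (boxplus (uφ i) (sv i) l)) atTop (𝓝 (xK (boxplus u s l))) :=
      argmax_tendsto K.isCompact hK hxK hbpsph hbpusph hbplim
    have hl' : Tendsto (fun i => xL (boxplus (uφ i) (sv i) l)) atTop (𝓝 (xL (boxplus u s l))) :=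
      argmax_tendsto L.isCompact hL hxL hbpsph hbpusph hbplim
    exact hk.sub hl'
  have hbase : Tendsto (fun i => xK (uφ i) - xL (uφ i)) atTop (𝓝 (xK u - xL u)) :=
    (argmax_tendsto K.isCompact hK hxK huφsph husph hUφu).sub
      (argmax_tendsto L.isCompact hL hxL huφsph husph hUφu)
  have hprod : Tendsto (fun i =>
      ⟪(xK (boxplus (uφ i) (sv i) lam) - xL (boxplus (uφ i) (sv i) lam)) -
          (xK (uφ i) - xL (uφ i)), sv i⟫ *
      ⟪(xK (boxplus (uφ i) (sv i) (-mu)) - xL (boxplus (uφ i) (sv i) (-mu))) -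
          (xK (uφ i) - xL (uφ i)), sv i⟫) atTop
      (𝓝 (⟪(xK (boxplus u s lam) - xL (boxplus u s lam)) - (xK u - xL u), s⟫ *
        ⟪(xK (boxplus u s (-mu)) - xL (boxplus u s (-mu))) - (xK u - xL u), s⟫)) :=
    (((key lam).sub hbase).inner hsvlim).mul (((key (-mu)).sub hbase).inner hsvlim)
  have hev : ∀ᶠ i in atTop,
      ⟪(xK (boxplus (uφ i) (sv i) lam) - xL (boxplus (uφ i) (sv i) lam)) -
          (xK (uφ i) - xL (uφ i)), sv i⟫ *
      ⟪(xK (boxplus (uφ i) (sv i) (-mu)) - xL (boxplus (uφ i) (sv i) (-mu))) -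
          (xK (uφ i) - xL (uφ i)), sv i⟫ ≤ 0 := by
    filter_upwards [htame] with i hi
    exact hi lam mu hl1 hl2 hm1 hm2
  exact le_of_tendsto hprod hev
end

section
/- For k, m, j ∈ ℕ, the set C_{k,m,j} of pairs (K,L) of strictly convex bodies such that there exists u ∈ S^{n−1} with N(u,1/j) ⊆ B_{k,m}(K,L) is closed in the product space of pairs of strictly convex bodies with the Hausdorff metric. -/
open scoped RealInnerProductSpace

variable {n : ℕ}

/-- `B_{k,m}(K,L)`: the set of `u ∈ S^{n-1}` such that some `t ∈ T_u` has
`N(t,1/m) ∩ T_u` contained in the set of directions in which `x_K − x_L` is `(1/k)`-tame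
at `u`, where `x` is a choice of reverse Gauss map. -/
def Bkm (x : ConvexBody (EuclideanSpace ℝ (Fin n)) →
      EuclideanSpace ℝ (Fin n) → EuclideanSpace ℝ (Fin n))
    (K L : ConvexBody (EuclideanSpace ℝ (Fin n))) (k m : ℕ) :
    Set (EuclideanSpace ℝ (Fin n)) :=
  {u | u ∈ Metric.sphere (0 : EuclideanSpace ℝ (Fin n)) 1 ∧
    ∃ t, t ∈ Metric.sphere (0 : EuclideanSpace ℝ (Fin n)) 1 ∧ ⟪t, u⟫ = 0 ∧
      ∀ s, s ∈ Metric.sphere (0 : EuclideanSpace ℝ (Fin n)) 1 → ⟪s, u⟫ = 0 →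
        angDist t s < 1 / m → IsTame (fun v => x K v - x L v) u s (1 / k)}

/-! The reverse Gauss map depends continuously on a strictly convex body: along bodies converging
in the Hausdorff metric, maximizers of a linear functional stay in a compact set, each of their
cluster points maximizes the functional on the limit body, and there the maximizer is unique.
Tameness is a non-strict inequality between values of `x_K − x_L`, so it passes to the limit. The
witnesses `u` and `t` live on the compact unit sphere, so along an ultrafilter they converge, and
the open conditions `Δ(u, z) < 1/j`, `Δ(t, s) < 1/m` at their limits hold eventually. -/

open Metric Filter Topology

theorem StrictConvex.eq_of_isMaxOn_inner_s11 {E : Type*} [NormedAddCommGroup E]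
    [InnerProductSpace ℝ E] {K : Set E} (hK : StrictConvex ℝ K) {v : E} (hv : v ≠ 0) {p q : E}
    (hp : p ∈ K) (hq : q ∈ K) (hpmax : IsMaxOn (fun y => ⟪y, v⟫) K p)
    (hqmax : IsMaxOn (fun y => ⟪y, v⟫) K q) : p = q := by
  by_contra hpq
  set z := (1 / 2 : ℝ) • p + (1 / 2 : ℝ) • q
  have hz : z ∈ interior K := hK hp hq hpq (by norm_num) (by norm_num) (by norm_num)
  have hzmax : IsMaxOn (fun y => ⟪y, v⟫) K z := by
    have hpq : ⟪q, v⟫ = ⟪p, v⟫ := le_antisymm (hpmax hq) (hqmax hp)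
    refine isMaxOn_iff.mpr fun w hw => ?_
    simp only [z, inner_add_left, real_inner_smul_left, hpq]
    linarith [isMaxOn_iff.mp hpmax w hw]
  -- a nonzero linear functional has no local maximum
  have hderiv := (hzmax.isLocalMax (mem_interior_iff_mem_nhds.mp hz)).hasFDerivAt_eq_zero
    ((innerSL ℝ v).hasFDerivAt.congr_of_eventuallyEq
      (.of_forall fun y => (real_inner_comm v y)))
  exact hv (by simpa using congrArg (· v) hderiv)

namespace ConvexBody

variable {E ι : Type*} {l : Filter ι}

section Normed

variable [NormedAddCommGroup E] [NormedSpace ℝ E] {K : ι → ConvexBody E} {K₀ : ConvexBody E}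

theorem tendsto_infDist_of_mem {y : ι → E} (hK : Tendsto K l (𝓝 K₀))
    (hy : ∀ᶠ i in l, y i ∈ K i) : Tendsto (fun i => infDist (y i) (K₀ : Set E)) l (𝓝 0) := by
  refine squeeze_zero' (.of_forall fun i => infDist_nonneg) ?_ (tendsto_iff_dist_tendsto_zero.mp hK)
  filter_upwards [hy] with i hi
  exact infDist_le_hausdorffDist_of_mem hi hausdorffEDist_ne_top

theorem mem_of_tendsto_s11 [l.NeBot] {y : ι → E} {p : E} (hK : Tendsto K l (𝓝 K₀))
    (hy : ∀ᶠ i in l, y i ∈ K i) (hp : Tendsto y l (𝓝 p)) : p ∈ K₀ := by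
  have hdist := ((continuous_infDist_pt (K₀ : Set E)).tendsto p).comp hp
  exact (K₀.isClosed.mem_iff_infDist_zero K₀.nonempty).mpr
    (tendsto_nhds_unique hdist (tendsto_infDist_of_mem hK hy))

theorem exists_tendsto_of_mem_s11 {q : E} (hK : Tendsto K l (𝓝 K₀)) (hq : q ∈ K₀) :
    ∃ y : ι → E, (∀ i, y i ∈ K i) ∧ Tendsto y l (𝓝 q) := by
  choose y hyK hyq using fun i => (K i).isCompact.exists_infDist_eq_dist (K i).nonempty q
  refine ⟨y, hyK, tendsto_iff_dist_tendsto_zero.mpr ?_⟩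
  refine squeeze_zero (fun i => dist_nonneg) (fun i => ?_)
    (tendsto_iff_dist_tendsto_zero.mp hK)
  rw [dist_comm, ← hyq, dist_comm]
  exact infDist_le_hausdorffDist_of_mem hq hausdorffEDist_ne_top

theorem isMaxOn_of_tendsto [l.NeBot] {f : E → ℝ} (hf : Continuous f) {y : ι → E} {p : E}
    (hK : Tendsto K l (𝓝 K₀)) (hy : ∀ᶠ i in l, IsMaxOn f (K i) (y i))
    (hp : Tendsto y l (𝓝 p)) : IsMaxOn f K₀ p := by
  intro q hq
  obtain ⟨y', hy'K, hy'q⟩ := exists_tendsto_of_mem_s11 hK hq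
  refine le_of_tendsto_of_tendsto ((hf.tendsto q).comp hy'q) ((hf.tendsto p).comp hp) ?_
  filter_upwards [hy] with i hi
  exact hi (hy'K i)

end Normed

theorem tendsto_of_isMaxOn_inner [NormedAddCommGroup E] [InnerProductSpace ℝ E] [ProperSpace E]
    {K : ι → ConvexBody E} {K₀ : ConvexBody E} (hK : Tendsto K l (𝓝 K₀))
    (hK₀ : StrictConvex ℝ (K₀ : Set E)) {v : E} (hv : v ≠ 0) {y : ι → E} {y₀ : E}
    (hy : ∀ᶠ i in l, y i ∈ K i ∧ IsMaxOn (fun w => ⟪w, v⟫) (K i : Set E) (y i))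
    (hy₀ : y₀ ∈ K₀) (hy₀max : IsMaxOn (fun w => ⟪w, v⟫) (K₀ : Set E) y₀) :
    Tendsto y l (𝓝 y₀) := by
  have hyK : ∀ᶠ i in l, y i ∈ K i := hy.mono fun i hi => hi.1
  have hnear : ∀ᶠ i in l, y i ∈ cthickening 1 (K₀ : Set E) := by
    filter_upwards [(tendsto_infDist_of_mem hK hyK).eventually_lt_const one_pos] with i hi
    exact thickening_subset_cthickening _ _ ((mem_thickening_iff_infDist_lt K₀.nonempty).mpr hi)
  refine K₀.isCompact.cthickening.tendsto_nhds_of_unique_mapClusterPt hnear fun p _ hp => ?_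
  obtain ⟨U, hUl, hyp⟩ := mapClusterPt_iff_ultrafilter.mp hp
  have hpK₀ := mem_of_tendsto_s11 (hK.mono_left hUl) (hUl hyK) hyp
  have hpmax := isMaxOn_of_tendsto (continuous_id.inner continuous_const) (hK.mono_left hUl)
    (hUl (hy.mono fun i hi => hi.2)) hyp
  exact hK₀.eq_of_isMaxOn_inner_s11 hv hpK₀ hy₀ hpmax hy₀max

end ConvexBody

section ReverseGaussMap

variable {ι : Type*} {l : Filter ι}
  {x : ConvexBody (EuclideanSpace ℝ (Fin n)) → EuclideanSpace ℝ (Fin n) → EuclideanSpace ℝ (Fin n)}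

theorem boxplus_mem_sphere_s11 {u t : EuclideanSpace ℝ (Fin n)} (hu : u ≠ 0) (htu : ⟪t, u⟫ = 0)
    (c : ℝ) : boxplus u t c ∈ sphere (0 : EuclideanSpace ℝ (Fin n)) 1 := by
  have hne : u + c • t ≠ 0 := by
    intro h
    have h' := congrArg (⟪·, u⟫) h
    simp only [inner_add_left, real_inner_smul_left, htu, mul_zero, add_zero, inner_zero_left,
      inner_self_eq_zero] at h'
    exact hu h'
  rw [mem_sphere_zero_iff_norm, boxplus, norm_smul, norm_inv, norm_norm,
    inv_mul_cancel₀ (norm_ne_zero_iff.mpr hne)]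

theorem continuous_angDist_left (w : EuclideanSpace ℝ (Fin n)) :
    Continuous fun v : EuclideanSpace ℝ (Fin n) => angDist v w :=
  Real.continuous_arccos.comp (continuous_id.inner continuous_const)

def IsReverseGaussMap
    (x : ConvexBody (EuclideanSpace ℝ (Fin n)) → EuclideanSpace ℝ (Fin n) →
      EuclideanSpace ℝ (Fin n)) : Prop :=
  ∀ K : ConvexBody (EuclideanSpace ℝ (Fin n)), StrictConvex ℝ (K : Set (EuclideanSpace ℝ (Fin n))) →
    ∀ v ∈ sphere (0 : EuclideanSpace ℝ (Fin n)) 1,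
      x K v ∈ K ∧ IsMaxOn (fun y => ⟪y, v⟫) (K : Set (EuclideanSpace ℝ (Fin n))) (x K v)

theorem IsReverseGaussMap.tendsto (hx : IsReverseGaussMap x)
    {K : ι → ConvexBody (EuclideanSpace ℝ (Fin n))} {K₀ : ConvexBody (EuclideanSpace ℝ (Fin n))}
    (hK : Tendsto K l (𝓝 K₀)) (hKs : ∀ i, StrictConvex ℝ (K i : Set (EuclideanSpace ℝ (Fin n))))
    (hK₀ : StrictConvex ℝ (K₀ : Set (EuclideanSpace ℝ (Fin n)))) {w : EuclideanSpace ℝ (Fin n)}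
    (hw : w ∈ sphere (0 : EuclideanSpace ℝ (Fin n)) 1) :
    Tendsto (fun i => x (K i) w) l (𝓝 (x K₀ w)) :=
  ConvexBody.tendsto_of_isMaxOn_inner hK hK₀ (ne_zero_of_mem_unit_sphere ⟨w, hw⟩)
    (.of_forall fun i => hx _ (hKs i) w hw) (hx _ hK₀ w hw).1 (hx _ hK₀ w hw).2

theorem IsTame.of_tendsto [l.NeBot]
    {F : ι → EuclideanSpace ℝ (Fin n) → EuclideanSpace ℝ (Fin n)}
    {f : EuclideanSpace ℝ (Fin n) → EuclideanSpace ℝ (Fin n)} {u t : EuclideanSpace ℝ (Fin n)}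
    {ε : ℝ} (hF : ∀ᶠ i in l, IsTame (F i) u t ε) (hu : Tendsto (fun i => F i u) l (𝓝 (f u)))
    (hbox : ∀ c, Tendsto (fun i => F i (boxplus u t c)) l (𝓝 (f (boxplus u t c)))) :
    IsTame f u t ε := by
  intro lam mu hlam hlamε hmu hmuε
  have hinner c := ((hbox c).sub hu).inner (𝕜 := ℝ) (tendsto_const_nhds (x := t))
  refine le_of_tendsto ((hinner lam).mul (hinner (-mu))) ?_
  filter_upwards [hF] with i hi
  exact hi lam mu hlam hlamε hmu hmuε

theorem mem_Bkm_of_tendsto (hx : IsReverseGaussMap x) [l.NeBot]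
    {K L : ι → ConvexBody (EuclideanSpace ℝ (Fin n))}
    {K₀ L₀ : ConvexBody (EuclideanSpace ℝ (Fin n))} (hK : Tendsto K l (𝓝 K₀))
    (hL : Tendsto L l (𝓝 L₀)) (hKs : ∀ i, StrictConvex ℝ (K i : Set (EuclideanSpace ℝ (Fin n))))
    (hLs : ∀ i, StrictConvex ℝ (L i : Set (EuclideanSpace ℝ (Fin n))))
    (hK₀ : StrictConvex ℝ (K₀ : Set (EuclideanSpace ℝ (Fin n))))
    (hL₀ : StrictConvex ℝ (L₀ : Set (EuclideanSpace ℝ (Fin n)))) {z : EuclideanSpace ℝ (Fin n)}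
    {k m : ℕ} (hz : ∀ᶠ i in l, z ∈ Bkm x (K i) (L i) k m) : z ∈ Bkm x K₀ L₀ k m := by
  have hzs : z ∈ sphere (0 : EuclideanSpace ℝ (Fin n)) 1 := hz.exists.choose_spec.1
  obtain ⟨t, ht⟩ := (hz.mono fun i hi => hi.2).choice
  set U := Ultrafilter.of l
  have hUl : (U : Filter ι) ≤ l := Ultrafilter.of_le l
  obtain ⟨t₀, ht₀, htU⟩ := (isCompact_sphere (0 : EuclideanSpace ℝ (Fin n)) 1).ultrafilter_le_nhds'
    (U.map t) ((ht.filter_mono hUl).mono fun i hi => hi.1)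
  have ht₀z : ⟪t₀, z⟫ = 0 :=
    tendsto_nhds_unique (((continuous_id.inner continuous_const).tendsto t₀).comp htU)
      (tendsto_const_nhds.congr' ((ht.filter_mono hUl).mono fun i hi => hi.2.1.symm))
  refine ⟨hzs, t₀, ht₀, ht₀z, fun s hs hsz hts => ?_⟩
  have hclose : ∀ᶠ i in U, angDist (t i) s < 1 / m :=
    (((continuous_angDist_left s).tendsto t₀).comp htU).eventually_lt_const hts
  have hgauss : ∀ w ∈ sphere (0 : EuclideanSpace ℝ (Fin n)) 1,
      Tendsto (fun i => x (K i) w - x (L i) w) U (𝓝 (x K₀ w - x L₀ w)) := fun w hw =>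
    ((hx.tendsto hK hKs hK₀ hw).sub (hx.tendsto hL hLs hL₀ hw)).mono_left hUl
  refine IsTame.of_tendsto (F := fun i v => x (K i) v - x (L i) v) ?_ (hgauss z hzs)
    fun c => hgauss _ (boxplus_mem_sphere_s11 (ne_zero_of_mem_unit_sphere ⟨z, hzs⟩) hsz c)
  filter_upwards [ht.filter_mono hUl, hclose] with i hi hi'
  exact hi.2.2 s hs hsz hi'

end ReverseGaussMap

/-- For `k, m, j ∈ ℕ`, the set `C_{k,m,j}` of pairs `(K,L)` of strictly convex bodies such that
there exists `u ∈ S^{n-1}` with `N(u,1/j) ⊆ B_{k,m}(K,L)` is closed in the space of pairs of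
strictly convex bodies with the (product) Hausdorff metric. Here `x` is any choice of reverse
Gauss map: `x K v` is the unique point of `K` maximizing `⟪·,v⟫` whenever `K` is strictly
convex and `v` is a unit vector. -/
theorem stmt11
    (x : ConvexBody (EuclideanSpace ℝ (Fin n)) →
      EuclideanSpace ℝ (Fin n) → EuclideanSpace ℝ (Fin n))
    (hx : ∀ K : ConvexBody (EuclideanSpace ℝ (Fin n)),
      StrictConvex ℝ (K : Set (EuclideanSpace ℝ (Fin n))) →
      ∀ v ∈ Metric.sphere (0 : EuclideanSpace ℝ (Fin n)) 1,
        x K v ∈ K ∧ IsMaxOn (fun y => ⟪y, v⟫) (K : Set (EuclideanSpace ℝ (Fin n))) (x K v))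
    (k m j : ℕ) :
    IsClosed {p : {K : ConvexBody (EuclideanSpace ℝ (Fin n)) //
          StrictConvex ℝ (K : Set (EuclideanSpace ℝ (Fin n)))} ×
        {K : ConvexBody (EuclideanSpace ℝ (Fin n)) //
          StrictConvex ℝ (K : Set (EuclideanSpace ℝ (Fin n)))} |
      ∃ u ∈ Metric.sphere (0 : EuclideanSpace ℝ (Fin n)) 1,
        ∀ z ∈ Metric.sphere (0 : EuclideanSpace ℝ (Fin n)) 1,
          angDist u z < 1 / j → z ∈ Bkm x (p.1 : ConvexBody (EuclideanSpace ℝ (Fin n)))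
            (p.2 : ConvexBody (EuclideanSpace ℝ (Fin n))) k m} := by
  rw [isClosed_iff_ultrafilter]
  rintro ⟨K₀, L₀⟩ U hU hC
  obtain ⟨u, hu⟩ := Filter.Eventually.choice hC
  obtain ⟨u₀, hu₀, huU⟩ := (isCompact_sphere (0 : EuclideanSpace ℝ (Fin n)) 1).ultrafilter_le_nhds'
    (U.map u) (hu.mono fun p hp => hp.1)
  refine ⟨u₀, hu₀, fun z hz hzu₀ => ?_⟩
  have hK := ((continuous_subtype_val.comp continuous_fst).tendsto _).mono_left hU
  have hL := ((continuous_subtype_val.comp continuous_snd).tendsto _).mono_left hU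
  refine mem_Bkm_of_tendsto hx hK hL (fun p => p.1.2) (fun p => p.2.2) K₀.2 L₀.2 ?_
  filter_upwards [hu, (((continuous_angDist_left z).tendsto u₀).comp huU).eventually_lt_const hzu₀]
    with p hp hpz
  exact hp.2 z hz hpz
end
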